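/- Let V = 𝔽₂^{n−t} × 𝔽₂^{t}, let P₁, P₂ be permutations of V, and let k₁ = (k₁^l, k₁^r), k₂ = (k₂^l, k₂^r) ∈ V. Define SoEM22(x) = P₁(x + k₁) + P₂(x + k₂) + k₁ + k₂, and for i, y ∈ 𝔽₂^{n−t} define F^L(i, y) = ∑_{u ∈ 𝔽₂^{t}} [ SoEM22(y, u) + P₁(y, u) + P₂(y + i, u) ]. If i = k₂^l, then F^L(i, ·) has the (n−t)-bit period k₁^l: F^L(i, y + k₁^l) = F^L(i, y) for every y ∈ 𝔽₂^{n−t}. -/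

import Mathlib

/-!
Write `Σ_y g = ∑ u, g (y, u)` for the sum of `g` over the fibre above `y`. Since `u ↦ u + c` permutes
`𝔽₂^t`, adding a key to the argument only shifts the fibre by the key's high half:
`∑ u, P ((y, u) + k) = Σ_{y + k^l} P`. For `i = k₂^l` the two `P₂`-terms of `F^L(i, y)` therefore give
the same fibre sum and cancel in characteristic 2, leaving
`F^L(i, y) = Σ_{y + k₁^l} P₁ + Σ_y P₁ + const`, which is invariant under `y ↦ y + k₁^l`.
-/

open Finset

def fiberSum {A B M : Type*} [Fintype B] [AddCommMonoid M] (f : A × B → M) (y : A) : M :=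
  ∑ u, f (y, u)

lemma sum_comp_add_eq_fiberSum {A B M : Type*} [Add A] [AddGroup B] [Fintype B] [AddCommMonoid M]
    (f : A × B → M) (k : A × B) (y : A) :
    ∑ u, f ((y, u) + k) = fiberSum f (y + k.1) :=
  Fintype.sum_equiv (Equiv.addRight k.2) _ _ fun _ => rfl

lemma periodic_add_comp_add_add_const {A M : Type*} [AddMonoid A] [AddCommSemigroup M]
    (h : A → M) (c : M) {a : A} (ha : a + a = 0) :
    Function.Periodic (fun y => h (y + a) + h y + c) a := by
  intro y
  change h (y + a + a) + h (y + a) + c = h (y + a) + h y + c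
  rw [add_assoc y, ha, add_zero, add_comm (h y)]

section SoEM22

variable {A B : Type*} [AddCommGroup A] [AddCommGroup B] [Fintype B]

def soEM22 (P₁ P₂ : A × B → A × B) (k₁ k₂ x : A × B) : A × B :=
  P₁ (x + k₁) + P₂ (x + k₂) + k₁ + k₂

def truncatedAttack (P₁ P₂ : A × B → A × B) (k₁ k₂ : A × B) (i y : A) : A × B :=
  ∑ u, (soEM22 P₁ P₂ k₁ k₂ (y, u) + P₁ (y, u) + P₂ (y + i, u))

variable [Module (ZMod 2) A] [Module (ZMod 2) B]

lemma truncatedAttack_eq (P₁ P₂ : A × B → A × B) (k₁ k₂ : A × B) (y : A) :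
    truncatedAttack P₁ P₂ k₁ k₂ k₂.1 y =
      fiberSum P₁ (y + k₁.1) + fiberSum P₁ y + Fintype.card B • (k₁ + k₂) := by
  simp only [truncatedAttack, soEM22, sum_add_distrib, sum_comp_add_eq_fiberSum, sum_const,
    card_univ]
  change _ + fiberSum P₁ y + fiberSum P₂ (y + k₂.1) = _
  calc _ = fiberSum P₁ (y + k₁.1) + fiberSum P₁ y + Fintype.card B • (k₁ + k₂)
        + (fiberSum P₂ (y + k₂.1) + fiberSum P₂ (y + k₂.1)) := by rw [smul_add]; abel
    _ = _ := by rw [ZModModule.add_self, add_zero]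

lemma truncatedAttack_periodic (P₁ P₂ : A × B → A × B) (k₁ k₂ : A × B) :
    Function.Periodic (truncatedAttack P₁ P₂ k₁ k₂ k₂.1) k₁.1 := by
  rw [funext (truncatedAttack_eq P₁ P₂ k₁ k₂)]
  exact periodic_add_comp_add_add_const _ _ (ZModModule.add_self k₁.1)

end SoEM22

/-- Q2-model truncated attack function for SoEM22 on `V = 𝔽₂^{n-t} × 𝔽₂^t`:
`F^L(i, y) = ∑_{u ∈ 𝔽₂^t} [SoEM22(y, u) + P₁(y, u) + P₂(y + i, u)]` has the
`(n-t)`-bit period `k₁^l` (the high bits of `k₁`) when `i = k₂^l`. -/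
theorem soEM22_q2_truncated_period
    {n t : ℕ}
    (P₁ P₂ : Equiv.Perm ((Fin (n - t) → ZMod 2) × (Fin t → ZMod 2)))
    (k₁ k₂ : (Fin (n - t) → ZMod 2) × (Fin t → ZMod 2))
    (SoEM22 : (Fin (n - t) → ZMod 2) × (Fin t → ZMod 2) →
      (Fin (n - t) → ZMod 2) × (Fin t → ZMod 2))
    (hS : ∀ x, SoEM22 x = P₁ (x + k₁) + P₂ (x + k₂) + k₁ + k₂)
    (FL : (Fin (n - t) → ZMod 2) → (Fin (n - t) → ZMod 2) →
      (Fin (n - t) → ZMod 2) × (Fin t → ZMod 2))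
    (hFL : ∀ i y, FL i y =
      ∑ u : Fin t → ZMod 2, (SoEM22 (y, u) + P₁ (y, u) + P₂ (y + i, u)))
    (i : Fin (n - t) → ZMod 2) (hi : i = k₂.1) :
    ∀ y : Fin (n - t) → ZMod 2, FL i (y + k₁.1) = FL i y := by
  subst hi
  obtain rfl : SoEM22 = soEM22 P₁ P₂ k₁ k₂ := funext hS
  obtain rfl : FL = truncatedAttack P₁ P₂ k₁ k₂ := funext₂ hFL
  exact truncatedAttack_periodic P₁ P₂ k₁ k₂
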